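/- (Pressure equation, eq. (6.7)) Let α ∈ ℝ. If Û ∈ ℝ^{n×(n−1)}, V̂ ∈ ℝ^{(n−1)×n}, P̂, Ĥ ∈ ℝ^{(n−1)×(n−1)}, F̂ ∈ ℝ^{n×(n−1)}, Ĝ ∈ ℝ^{(n−1)×n} satisfy Û(Λ² + (h²α/6)Σ) − Γᵀ V̂ Γᵀ − (h²/6) Γᵀ P̂ Σ = h² F̂, −Γ Û Γ + (Λ² + (h²α/6)Σ) V̂ − (h²/6) Σ P̂ Γ = h² Ĝ, and Γ Û Σ + Σ V̂ Γᵀ = 6 Ĥ, then Λ² P̂ Σ + Σ P̂ Λ² = 6(α Ĥ − Γ F̂ − Ĝ Γᵀ). -/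

import Mathlib

open Matrix Real

/-- `τ_i = -2 sin(iπ/(2n))`. -/
noncomputable def tau (n i : ℕ) : ℝ := -2 * Real.sin ((i : ℝ) * Real.pi / (2 * n))

/-- `σ_i = 2(2 + cos(iπ/n))`. -/
noncomputable def sigma (n i : ℕ) : ℝ := 2 * (2 + Real.cos ((i : ℝ) * Real.pi / n))

/-- `Λ = diag(τ_1, …, τ_{n-1})`. -/
noncomputable def Lam (n : ℕ) : Matrix (Fin (n - 1)) (Fin (n - 1)) ℝ :=
  Matrix.diagonal fun j => tau n ((j : ℕ) + 1)

/-- `Σ = diag(σ_1, …, σ_{n-1})`. -/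
noncomputable def Sig (n : ℕ) : Matrix (Fin (n - 1)) (Fin (n - 1)) ℝ :=
  Matrix.diagonal fun j => sigma n ((j : ℕ) + 1)

/-- `Γ = [0, Λ] ∈ ℝ^{(n-1)×n}` (zero first column). -/
noncomputable def Gam (n : ℕ) : Matrix (Fin (n - 1)) (Fin n) ℝ :=
  Matrix.of fun k l => if (l : ℕ) = (k : ℕ) + 1 then tau n ((k : ℕ) + 1) else 0


lemma gam_mul_gamT (n : ℕ) : Gam n * (Gam n)ᵀ = Lam n * Lam n := by
  ext k j
  have hk : (k : ℕ) + 1 < n := by omega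
  rw [Matrix.mul_apply, Finset.sum_eq_single (⟨(k : ℕ) + 1, hk⟩ : Fin n)]
  · simp only [Gam, Lam, Matrix.of_apply, Matrix.transpose_apply, Matrix.diagonal_mul_diagonal,
      Matrix.diagonal_apply]
    by_cases hkj : k = j
    · subst hkj; simp
    · have hne : ¬ ((k : ℕ) + 1 = (j : ℕ) + 1) := fun hc => hkj (Fin.ext (by omega))
      simp [hne, hkj]; exact fun hc => absurd (Fin.ext hc) hkj
  · intro l _ hl
    have hne : ¬ ((l : Fin n) : ℕ) = (k : ℕ) + 1 := fun hc => hl (Fin.ext hc)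
    simp [Gam, hne]
  · intro hc; exact absurd (Finset.mem_univ _) hc

/-- Pressure equation (eq. (6.7)): from the transformed system with pressure `P̂` and
Gauss data `Ĥ`, one derives `Λ² P̂ Σ + Σ P̂ Λ² = 6(α Ĥ − Γ F̂ − Ĝ Γᵀ)`. -/
theorem stmt14 (n : ℕ) (hn : 2 ≤ n) (h : ℝ) (hh : h = 1 / n) (α : ℝ)
    (Uhat : Matrix (Fin n) (Fin (n - 1)) ℝ)
    (Vhat : Matrix (Fin (n - 1)) (Fin n) ℝ)
    (Phat Hhat : Matrix (Fin (n - 1)) (Fin (n - 1)) ℝ)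
    (Fhat : Matrix (Fin n) (Fin (n - 1)) ℝ)
    (Ghat : Matrix (Fin (n - 1)) (Fin n) ℝ)
    (h1 : Uhat * (Lam n * Lam n + (h ^ 2 * α / 6) • Sig n) - (Gam n)ᵀ * Vhat * (Gam n)ᵀ -
      (h ^ 2 / 6) • ((Gam n)ᵀ * Phat * Sig n) = h ^ 2 • Fhat)
    (h2 : -(Gam n * Uhat * Gam n) + (Lam n * Lam n + (h ^ 2 * α / 6) • Sig n) * Vhat -
      (h ^ 2 / 6) • (Sig n * Phat * Gam n) = h ^ 2 • Ghat)
    (h3 : Gam n * Uhat * Sig n + Sig n * Vhat * (Gam n)ᵀ = (6 : ℝ) • Hhat) :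
    Lam n * Lam n * Phat * Sig n + Sig n * Phat * (Lam n * Lam n) =
      (6 : ℝ) • (α • Hhat - Gam n * Fhat - Ghat * (Gam n)ᵀ) := by
  have hn0 : (0:ℝ) < (n:ℝ) := by exact_mod_cast (by omega : 0 < n)
  have hh0 : h ≠ 0 := by rw [hh]; positivity
  have hd : (h ^ 2 / 6 : ℝ) ≠ 0 := div_ne_zero (pow_ne_zero 2 hh0) (by norm_num)
  have hG : Gam n * (Gam n)ᵀ = Lam n * Lam n := gam_mul_gamT n
  have e1 := congrArg (fun M => Gam n * M) h1
  have e2 := congrArg (fun M => M * (Gam n)ᵀ) h2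
  simp only [Matrix.mul_sub, Matrix.sub_mul, Matrix.mul_add, Matrix.add_mul, Matrix.mul_smul,
    Matrix.smul_mul, Matrix.neg_mul, ← Matrix.mul_assoc] at e1 e2
  rw [hG] at e1
  rw [Matrix.mul_assoc (Gam n * Uhat) (Gam n) (Gam n)ᵀ, hG,
    Matrix.mul_assoc (Sig n * Phat) (Gam n) (Gam n)ᵀ, hG,
    ← Matrix.mul_assoc (Gam n * Uhat) (Lam n) (Lam n)] at e2
  apply smul_right_injective (Matrix (Fin (n - 1)) (Fin (n - 1)) ℝ) hd
  linear_combination (norm := module) -e1 - e2 + (h ^ 2 * α / 6) • h3
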